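/- arXiv:2301.05073 — 8 statements merged into one kernel-verified Lean document; each statement's English description precedes it below -/
import Mathlib

section
/- Let a, b ∈ ℝ with |a − b| ≤ (Λ − d)/ϑ − u, and let r_a ∈ [a + d − u, a + d] and r_b ∈ [b + d − u, b + d] be reception times. Then for any hardware clock H: a − b − κ ≤ (H(r_a) − H(r_b)) − κ/2 ≤ a − b. (In the paper, a is the pulse time t_{v,ℓ−1} of a node's own predecessor and b is the maximum, respectively minimum, pulse time t_max, t_min over its neighbours on layer ℓ−1, so that H(r_a) − H(r_b) is the difference H_own − H_max, respectively H_own − H_min, of local reception times.) -/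
/-!
Since `H` is strictly increasing with rate in `[1, ϑ]`, the clock difference `H ra - H rb` lies
between the real-time difference `ra - rb` and its dilation `ϑ * (ra - rb)`. The real-time
difference is within `u` of `a - b`; dilating it by `ϑ` adds at most `(ϑ - 1) (|a - b| + u)`,
which the hypothesis on `|a - b|` bounds by `(1 - 1/ϑ) (Λ - d)`. So both ends of the segment,
and hence `H ra - H rb`, lie within `κ / 2` of `a - b`.
-/

open Set

def IsHardwareClock (ϑ : ℝ) (H : ℝ → ℝ) : Prop :=
  ∀ t t' : ℝ, t ≤ t' → t' - t ≤ H t' - H t ∧ H t' - H t ≤ ϑ * (t' - t)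

theorem IsHardwareClock.sub_mem_uIcc {ϑ : ℝ} {H : ℝ → ℝ} (hH : IsHardwareClock ϑ H) (s t : ℝ) :
    H s - H t ∈ uIcc (s - t) (ϑ * (s - t)) := by
  rcases le_total t s with hts | hst
  · exact Icc_subset_uIcc (hH t s hts)
  · obtain ⟨hlo, hhi⟩ := hH s t hst
    refine Icc_subset_uIcc' ⟨?_, ?_⟩ <;> linarith

theorem abs_mul_sub_le {ϑ D u x δ : ℝ} (hϑ : 1 ≤ ϑ) (hδ : |δ| ≤ D / ϑ - u)
    (hx : |x - δ| ≤ u) : |ϑ * x - δ| ≤ u + (1 - 1 / ϑ) * D := by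
  have hϑ0 : ϑ ≠ 0 := by positivity
  calc |ϑ * x - δ| = |ϑ * (x - δ) + (ϑ - 1) * δ| := by ring_nf
    _ ≤ ϑ * |x - δ| + (ϑ - 1) * |δ| := by
      grw [abs_add_le, abs_mul, abs_mul, abs_of_nonneg (by linarith : (0 : ℝ) ≤ ϑ),
        abs_of_nonneg (sub_nonneg.mpr hϑ)]
    _ ≤ ϑ * u + (ϑ - 1) * (D / ϑ - u) := by gcongr
    _ = u + (1 - 1 / ϑ) * D := by field_simp; ring

theorem abs_sub_le_of_mem_uIcc_mul {ϑ D u x y δ : ℝ} (hϑ : 1 ≤ ϑ) (hD : 0 ≤ D)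
    (hδ : |δ| ≤ D / ϑ - u) (hx : |x - δ| ≤ u) (hy : y ∈ uIcc x (ϑ * x)) :
    |y - δ| ≤ u + (1 - 1 / ϑ) * D := by
  have hslack : 0 ≤ (1 - 1 / ϑ) * D :=
    mul_nonneg (sub_nonneg.mpr (div_le_one_of_le₀ hϑ (by linarith))) hD
  set r := u + (1 - 1 / ϑ) * D
  have mem_Icc_of_abs_le {z : ℝ} (hz : |z - δ| ≤ r) : z ∈ Icc (δ - r) (δ + r) := by
    rwa [abs_sub_comm, mem_Icc_iff_abs_le] at hz
  have hy' := uIcc_subset_Icc (mem_Icc_of_abs_le (by linarith))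
    (mem_Icc_of_abs_le (abs_mul_sub_le hϑ hδ hx)) hy
  rwa [abs_sub_comm, mem_Icc_iff_abs_le]

theorem stmt1_general
    (ϑ u d Λ κ : ℝ)
    (hϑ : 1 < ϑ) (hΛ : d < Λ)
    (hκ : κ = 2 * (u + (1 - 1/ϑ) * (Λ - d)))
    (H : ℝ → ℝ)
    (hH : ∀ t t' : ℝ, t ≤ t' → t' - t ≤ H t' - H t ∧ H t' - H t ≤ ϑ * (t' - t))
    (a b ra rb : ℝ)
    (hab : |a - b| ≤ (Λ - d)/ϑ - u)
    (hra : a + d - u ≤ ra ∧ ra ≤ a + d)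
    (hrb : b + d - u ≤ rb ∧ rb ≤ b + d) :
    a - b - κ ≤ (H ra - H rb) - κ/2 ∧ (H ra - H rb) - κ/2 ≤ a - b := by
  have hreal : |(ra - rb) - (a - b)| ≤ u := by
    rw [abs_sub_le_iff]; constructor <;> linarith
  have hclock : |(H ra - H rb) - (a - b)| ≤ κ / 2 := by
    rw [hκ, mul_div_cancel_left₀ _ two_ne_zero]
    exact abs_sub_le_of_mem_uIcc_mul hϑ.le (sub_nonneg.mpr hΛ.le) hab hreal
      (IsHardwareClock.sub_mem_uIcc hH ra rb)
  rw [abs_sub_le_iff] at hclock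
  constructor <;> linarith

/-- accuracy of local skew estimates via reception times. -/
theorem stmt1
    (ϑ u d Λ κ : ℝ)
    (hϑ : 1 < ϑ) (hu : 0 ≤ u) (hd : u ≤ d) (hΛ : d < Λ)
    (hκ : κ = 2 * (u + (1 - 1/ϑ) * (Λ - d)))
    (H : ℝ → ℝ)
    (hH : ∀ t t' : ℝ, t ≤ t' → t' - t ≤ H t' - H t ∧ H t' - H t ≤ ϑ * (t' - t))
    (a b ra rb : ℝ)
    (hab : |a - b| ≤ (Λ - d)/ϑ - u)
    (hra : a + d - u ≤ ra ∧ ra ≤ a + d)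
    (hrb : b + d - u ≤ rb ∧ rb ≤ b + d) :
    a - b - κ ≤ (H ra - H rb) - κ/2 ∧ (H ra - H rb) - κ/2 ≤ a - b :=
  stmt1_general ϑ u d Λ κ hϑ hΛ hκ H hH a b ra rb hab hra hrb
end

section
/- Assume the measurement-accuracy assumptions hold and that t_own − t_min < Λ − d. Then the algorithm correction satisfies C ≤ Λ − d. -/
theorem stmt2
    (ϑ u d Λ κ : ℝ)
    (hϑ : 1 < ϑ) (hu : 0 ≤ u) (hd : u ≤ d) (hΛ : d < Λ)
    (hκ : κ = 2 * (u + (1 - 1/ϑ) * (Λ - d)))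
    (Hown Hmin Hmax : ℝ) (hHmm : Hmin ≤ Hmax)
    (Δ : ℝ)
    (hΔ : IsLeast {x : ℝ | ∃ s : ℕ,
      x = max (Hown - Hmax + 4*(s:ℝ)*κ) (Hown - Hmin - 4*(s:ℝ)*κ)} (Δ + κ/2))
    (C : ℝ)
    (hC1 : 0 ≤ Δ → Δ ≤ ϑ*κ → C = Δ)
    (hC2 : Δ < 0 → C = min (Hown - Hmin + 3*κ/2) 0)
    (hC3 : ϑ*κ < Δ → C = max (Hown - Hmax - 3*κ/2) (ϑ*κ))
    (town tmin tmax : ℝ) (htmm : tmin ≤ tmax)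
    (hmax1 : town - tmax - κ ≤ (Hown - Hmax) - κ/2)
    (hmax2 : (Hown - Hmax) - κ/2 ≤ town - tmax)
    (hmin1 : town - tmin - κ ≤ (Hown - Hmin) - κ/2)
    (hmin2 : (Hown - Hmin) - κ/2 ≤ town - tmin)
    (hsmall : town - tmin < Λ - d) :
    C ≤ Λ - d := by
  have hϑ0 : (0:ℝ) < ϑ := by linarith
  have hκpos : 0 < κ := by
    have h1 : 1/ϑ < 1 := by
      rw [div_lt_one hϑ0]; exact hϑ
    nlinarith
  have hΔle : Δ ≤ Hown - Hmin - κ/2 := by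
    have hmem : Δ + κ/2 ≤ max (Hown - Hmax + 4*((0:ℕ):ℝ)*κ) (Hown - Hmin - 4*((0:ℕ):ℝ)*κ) :=
      hΔ.2 ⟨0, rfl⟩
    have hmx : max (Hown - Hmax + 4*((0:ℕ):ℝ)*κ) (Hown - Hmin - 4*((0:ℕ):ℝ)*κ)
        = Hown - Hmin := by
      rw [max_eq_right] <;> push_cast <;> linarith
    rw [hmx] at hmem
    linarith
  rcases lt_trichotomy Δ 0 with h | h | h
  · rw [hC2 h]
    have : min (Hown - Hmin + 3*κ/2) 0 ≤ 0 := min_le_right _ _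
    linarith
  · rcases le_or_gt Δ (ϑ*κ) with h2 | h2
    · rw [hC1 h.ge h2]; linarith
    · rw [hC3 h2]
      apply max_le <;> linarith
  · rcases le_or_gt Δ (ϑ*κ) with h2 | h2
    · rw [hC1 h.le h2]; linarith
    · rw [hC3 h2]
      apply max_le <;> linarith
end

section
/- Let C ∈ ℝ with C ≤ Λ − d, let H be a hardware clock, let t_prev ∈ ℝ, let r ∈ [t_prev + d − u, t_prev + d], and let t_pulse ∈ ℝ satisfy H(t_pulse) = H(r) + Λ − d − C. Then d − u + (Λ − d − C)/ϑ ≤ t_pulse − t_prev ≤ Λ − C. -/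
/-- bounds on the time between a predecessor's pulse and the node's
own pulse, given a correction `C ≤ Λ - d`. -/
theorem stmt3
    (ϑ u d Λ κ : ℝ)
    (hϑ : 1 < ϑ) (hu : 0 ≤ u) (hd : u ≤ d) (hΛ : d < Λ)
    (hκ : κ = 2 * (u + (1 - 1/ϑ) * (Λ - d)))
    (C : ℝ) (hC : C ≤ Λ - d)
    (H : ℝ → ℝ)
    (hH : ∀ t t' : ℝ, t ≤ t' → t' - t ≤ H t' - H t ∧ H t' - H t ≤ ϑ * (t' - t))
    (tprev r tpulse : ℝ)
    (hr : tprev + d - u ≤ r ∧ r ≤ tprev + d)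
    (hpulse : H tpulse = H r + Λ - d - C) :
    d - u + (Λ - d - C)/ϑ ≤ tpulse - tprev ∧ tpulse - tprev ≤ Λ - C := by
  have hϑ0 : (0:ℝ) < ϑ := by linarith
  have hCnn : 0 ≤ Λ - d - C := by linarith
  have hrle : r ≤ tpulse := by
    by_contra h
    push_neg at h
    obtain ⟨h1, _⟩ := hH tpulse r h.le
    have : H r - H tpulse = -(Λ - d - C) := by linarith [hpulse]
    linarith
  obtain ⟨h1, h2⟩ := hH r tpulse hrle
  have hd1 : tpulse - r ≤ Λ - d - C := by linarith [hpulse]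
  have hd2 : (Λ - d - C)/ϑ ≤ tpulse - r := by
    rw [div_le_iff₀ hϑ0]
    calc Λ - d - C = H tpulse - H r := by linarith [hpulse]
    _ ≤ ϑ * (tpulse - r) := h2
    _ = (tpulse - r) * ϑ := by ring
  exact ⟨by linarith [hr.1], by linarith [hr.2]⟩
end

section
/- Assume the measurement-accuracy assumptions hold. Then for every s ∈ ℕ, the algorithm correction C satisfies the slow condition SC(s): C/ϑ ≤ t_own − t_max + 4sκ, or C/ϑ ≤ t_own − t_min − 4sκ, or C ≤ 0. -/
theorem stmt4
    (ϑ u d Λ κ : ℝ)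
    (hϑ : 1 < ϑ) (hu : 0 ≤ u) (hd : u ≤ d) (hΛ : d < Λ)
    (hκ : κ = 2 * (u + (1 - 1/ϑ) * (Λ - d)))
    (Hown Hmin Hmax : ℝ) (hHmm : Hmin ≤ Hmax)
    (Δ : ℝ)
    (hΔ : IsLeast {x : ℝ | ∃ s : ℕ,
      x = max (Hown - Hmax + 4*(s:ℝ)*κ) (Hown - Hmin - 4*(s:ℝ)*κ)} (Δ + κ/2))
    (C : ℝ)
    (hC1 : 0 ≤ Δ → Δ ≤ ϑ*κ → C = Δ)
    (hC2 : Δ < 0 → C = min (Hown - Hmin + 3*κ/2) 0)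
    (hC3 : ϑ*κ < Δ → C = max (Hown - Hmax - 3*κ/2) (ϑ*κ))
    (town tmin tmax : ℝ) (htmm : tmin ≤ tmax)
    (hmax1 : town - tmax - κ ≤ (Hown - Hmax) - κ/2)
    (hmax2 : (Hown - Hmax) - κ/2 ≤ town - tmax)
    (hmin1 : town - tmin - κ ≤ (Hown - Hmin) - κ/2)
    (hmin2 : (Hown - Hmin) - κ/2 ≤ town - tmin)
    : ∀ s : ℕ,
      C/ϑ ≤ town - tmax + 4*(s:ℝ)*κ ∨
      C/ϑ ≤ town - tmin - 4*(s:ℝ)*κ ∨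
      C ≤ 0 := by
  intro s
  have hϑ0 : (0:ℝ) < ϑ := by linarith
  have hκpos : 0 < κ := by
    have h1 : 1/ϑ < 1 := by
      rw [div_lt_one hϑ0]; exact hϑ
    nlinarith
  rcases lt_or_ge Δ 0 with hneg | hpos
  · exact Or.inr (Or.inr ((hC2 hneg) ▸ min_le_right _ _))
  · obtain ⟨⟨s₀, hs₀⟩, hlb⟩ := hΔ
    have hs₀κ : 0 ≤ 4*(s₀:ℝ)*κ := by positivity
    have hΔA : Hown - Hmax - κ/2 ≤ Δ := by
      have h1 : Hown - Hmax + 4*(s₀:ℝ)*κ ≤ Δ + κ/2 := by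
        rw [hs₀]; exact le_max_left _ _
      linarith
    have hCΔ : C ≤ Δ ∧ 0 ≤ C := by
      rcases le_or_gt Δ (ϑ*κ) with h | h
      · rw [hC1 hpos h]; exact ⟨le_refl _, hpos⟩
      · rw [hC3 h]
        constructor
        · exact max_le (by linarith) h.le
        · exact le_trans (by positivity) (le_max_right _ _)
    have hCdiv : C/ϑ ≤ C := div_le_self hCΔ.2 hϑ.le
    have hlbs : Δ + κ/2 ≤ max (Hown - Hmax + 4*(s:ℝ)*κ) (Hown - Hmin - 4*(s:ℝ)*κ) :=
      hlb ⟨s, rfl⟩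
    rcases le_max_iff.mp hlbs with h | h
    · exact Or.inl (by linarith [hCΔ.1])
    · exact Or.inr (Or.inl (by linarith [hCΔ.1]))
end

section
/- Assume the measurement-accuracy assumptions hold. Then for every integer s ≥ 1, the algorithm correction C satisfies the fast condition FC(s): C ≥ t_own − t_max + (4s−2)κ + κ, or C ≥ t_own − t_min − (4s−2)κ + κ, or C ≥ κ. -/
theorem stmt5
    (ϑ u d Λ κ : ℝ)
    (hϑ : 1 < ϑ) (hu : 0 ≤ u) (hd : u ≤ d) (hΛ : d < Λ)
    (hκ : κ = 2 * (u + (1 - 1/ϑ) * (Λ - d)))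
    (Hown Hmin Hmax : ℝ) (hHmm : Hmin ≤ Hmax)
    (Δ : ℝ)
    (hΔ : IsLeast {x : ℝ | ∃ s : ℕ,
      x = max (Hown - Hmax + 4*(s:ℝ)*κ) (Hown - Hmin - 4*(s:ℝ)*κ)} (Δ + κ/2))
    (C : ℝ)
    (hC1 : 0 ≤ Δ → Δ ≤ ϑ*κ → C = Δ)
    (hC2 : Δ < 0 → C = min (Hown - Hmin + 3*κ/2) 0)
    (hC3 : ϑ*κ < Δ → C = max (Hown - Hmax - 3*κ/2) (ϑ*κ))
    (town tmin tmax : ℝ) (htmm : tmin ≤ tmax)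
    (hmax1 : town - tmax - κ ≤ (Hown - Hmax) - κ/2)
    (hmax2 : (Hown - Hmax) - κ/2 ≤ town - tmax)
    (hmin1 : town - tmin - κ ≤ (Hown - Hmin) - κ/2)
    (hmin2 : (Hown - Hmin) - κ/2 ≤ town - tmin)
    : ∀ s : ℕ, 1 ≤ s →
      (town - tmax + (4*(s:ℝ)-2)*κ + κ ≤ C ∨
       town - tmin - (4*(s:ℝ)-2)*κ + κ ≤ C ∨
       κ ≤ C) := by
  have hκpos : 0 < κ := by
    have h1 : 0 < 1 - 1/ϑ := by
      have : 1/ϑ < 1 := by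
        rw [div_lt_one (by linarith)]; linarith
      linarith
    nlinarith [sub_pos.mpr hΛ]
  intro s hs
  rcases lt_or_ge (ϑ*κ) Δ with hcase | hcase
  · -- C ≥ ϑκ ≥ κ
    right; right
    rw [hC3 hcase]
    calc κ ≤ ϑ*κ := by nlinarith
    _ ≤ _ := le_max_right _ _
  · -- Δ ≤ ϑκ : show Δ ≤ C
    have hΔC : Δ ≤ C := by
      rcases lt_or_ge Δ 0 with hneg | hnn
      · rw [hC2 hneg]
        have hmem0 : Hown - Hmin ∈ {x : ℝ | ∃ s : ℕ,
            x = max (Hown - Hmax + 4*(s:ℝ)*κ) (Hown - Hmin - 4*(s:ℝ)*κ)} := by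
          refine ⟨0, ?_⟩
          push_cast
          rw [max_eq_right (by linarith)]
          ring
        have hlb := hΔ.2 hmem0
        exact le_min (by linarith) (by linarith)
      · rw [hC1 hnn hcase]
    obtain ⟨s₀, hs₀⟩ := hΔ.1
    have hA : Hown - Hmax + 4*(s₀:ℝ)*κ ≤ Δ + κ/2 :=
      hs₀ ▸ le_max_left _ _
    have hB : Hown - Hmin - 4*(s₀:ℝ)*κ ≤ Δ + κ/2 :=
      hs₀ ▸ le_max_right _ _
    rcases le_or_gt s s₀ with hss | hss
    · left
      have : (s:ℝ) ≤ (s₀:ℝ) := Nat.cast_le.mpr hss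
      nlinarith
    · right; left
      have : (s₀:ℝ) + 1 ≤ (s:ℝ) := by exact_mod_cast hss
      nlinarith
end

section
/- Assume the measurement-accuracy assumptions hold. Then the algorithm correction C satisfies the jump condition JC: (κ < C/ϑ and C/ϑ ≤ t_own − t_max − κ), or (C < 0 and C ≥ t_own − t_min + κ), or (0 ≤ C/ϑ ≤ κ). -/
theorem stmt6
    (ϑ u d Λ κ : ℝ)
    (hϑ : 1 < ϑ) (hu : 0 ≤ u) (hd : u ≤ d) (hΛ : d < Λ)
    (hκ : κ = 2 * (u + (1 - 1/ϑ) * (Λ - d)))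
    (Hown Hmin Hmax : ℝ) (hHmm : Hmin ≤ Hmax)
    (Δ : ℝ)
    (hΔ : IsLeast {x : ℝ | ∃ s : ℕ,
      x = max (Hown - Hmax + 4*(s:ℝ)*κ) (Hown - Hmin - 4*(s:ℝ)*κ)} (Δ + κ/2))
    (C : ℝ)
    (hC1 : 0 ≤ Δ → Δ ≤ ϑ*κ → C = Δ)
    (hC2 : Δ < 0 → C = min (Hown - Hmin + 3*κ/2) 0)
    (hC3 : ϑ*κ < Δ → C = max (Hown - Hmax - 3*κ/2) (ϑ*κ))
    (town tmin tmax : ℝ) (htmm : tmin ≤ tmax)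
    (hmax1 : town - tmax - κ ≤ (Hown - Hmax) - κ/2)
    (hmax2 : (Hown - Hmax) - κ/2 ≤ town - tmax)
    (hmin1 : town - tmin - κ ≤ (Hown - Hmin) - κ/2)
    (hmin2 : (Hown - Hmin) - κ/2 ≤ town - tmin)
    : (κ < C/ϑ ∧ C/ϑ ≤ town - tmax - κ) ∨
      (C < 0 ∧ town - tmin + κ ≤ C) ∨
      (0 ≤ C/ϑ ∧ C/ϑ ≤ κ) := by

  have hϑ0 : (0:ℝ) < ϑ := by linarith
  have hκ0 : 0 < κ := by
    have h1 : 1/ϑ < 1 := by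
      rw [div_lt_one hϑ0]; linarith
    nlinarith [mul_pos (by linarith : (0:ℝ) < 1 - 1/ϑ) (by linarith : (0:ℝ) < Λ - d)]
  rcases lt_trichotomy Δ 0 with hneg | heq | hpos
  · rw [hC2 hneg]
    rcases le_or_gt 0 (Hown - Hmin + 3*κ/2) with ha | ha
    · right; right
      rw [min_eq_right ha]
      constructor
      · positivity
      · rw [div_le_iff₀ hϑ0]; nlinarith
    · right; left
      rw [min_eq_left ha.le]
      constructor
      · exact ha
      · linarith
  · rcases le_or_gt Δ (ϑ*κ) with hle | hgt
    · rw [hC1 heq.ge hle]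
      right; right
      constructor
      · exact div_nonneg (by linarith) hϑ0.le
      · rw [div_le_iff₀ hϑ0]; nlinarith
    · rw [hC3 hgt]
      exfalso; nlinarith
  · rcases le_or_gt Δ (ϑ*κ) with hle | hgt
    · rw [hC1 hpos.le hle]
      right; right
      constructor
      · exact div_nonneg hpos.le hϑ0.le
      · rw [div_le_iff₀ hϑ0]; nlinarith
    · rw [hC3 hgt]
      rcases le_or_gt (Hown - Hmax - 3*κ/2) (ϑ*κ) with ha | ha
      · right; right
        rw [max_eq_right ha, mul_comm ϑ κ, mul_div_assoc, div_self hϑ0.ne', mul_one]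
        exact ⟨hκ0.le, le_refl κ⟩
      · left
        rw [max_eq_left ha.le]
        have hCpos : 0 < Hown - Hmax - 3*κ/2 := by nlinarith
        constructor
        · rw [lt_div_iff₀ hϑ0]; nlinarith
        · have := div_le_self hCpos.le (by linarith : (1:ℝ) ≤ ϑ)
          linarith
end

section
/- Under the standing assumptions, if L_0 ≤ 4κ, then Ψ^0(ℓ) ≤ 6κD for all ℓ ∈ ℕ (a bound on the global skew: for all v, w ∈ V and all ℓ, t_{v,ℓ} − t_{w,ℓ} ≤ 6κD). -/
/-- The `tmax`/`tmin` over neighbours in the SC/FC/JC conditions are expressed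
pointwise over the (nonempty) neighbourhood, which is equivalent. -/
theorem stmt10
    (ϑ u d Λ κ : ℝ)
    (hϑ : 1 < ϑ) (hu : 0 ≤ u) (hd : u ≤ d) (hΛ : d < Λ)
    (hκ : κ = 2 * (u + (1 - 1/ϑ) * (Λ - d)))
    {V : Type*} [Fintype V] [Nonempty V]
    (G : SimpleGraph V) [DecidableRel G.Adj]
    (hconn : G.Connected) (hdeg : ∀ v : V, 2 ≤ G.degree v)
    (D : ℕ) (hD : 1 ≤ D) (hdiam : ∀ v w : V, G.dist v w ≤ D)
    (t : V → ℕ → ℝ) (C : V → ℕ → ℝ)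
    (hDRIFT : ∀ (v : V) (ℓ : ℕ),
      d - u + (Λ - d - C v (ℓ+1)) / ϑ ≤ t v (ℓ+1) - t v ℓ ∧
      t v (ℓ+1) - t v ℓ ≤ Λ - C v (ℓ+1))
    (hSC : ∀ (s : ℕ) (v : V) (ℓ : ℕ),
      (∀ w : V, G.Adj v w → C v (ℓ+1) / ϑ ≤ t v ℓ - t w ℓ + 4*(s:ℝ)*κ) ∨
      (∃ w : V, G.Adj v w ∧ C v (ℓ+1) / ϑ ≤ t v ℓ - t w ℓ - 4*(s:ℝ)*κ) ∨
      C v (ℓ+1) ≤ 0)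
    (hFC : ∀ (s : ℕ), 1 ≤ s → ∀ (v : V) (ℓ : ℕ),
      (∃ w : V, G.Adj v w ∧ t v ℓ - t w ℓ + (4*(s:ℝ)-2)*κ + κ ≤ C v (ℓ+1)) ∨
      (∀ w : V, G.Adj v w → t v ℓ - t w ℓ - (4*(s:ℝ)-2)*κ + κ ≤ C v (ℓ+1)) ∨
      κ ≤ C v (ℓ+1))
    (hJC : ∀ (v : V) (ℓ : ℕ),
      (κ < C v (ℓ+1)/ϑ ∧ ∀ w : V, G.Adj v w → C v (ℓ+1)/ϑ ≤ t v ℓ - t w ℓ - κ) ∨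
      (C v (ℓ+1) < 0 ∧ ∀ w : V, G.Adj v w → t v ℓ - t w ℓ + κ ≤ C v (ℓ+1)) ∨
      (0 ≤ C v (ℓ+1)/ϑ ∧ C v (ℓ+1)/ϑ ≤ κ))
    (hL0 : ∀ v w : V, G.Adj v w → |t v 0 - t w 0| ≤ 4*κ) :
    ∀ (ℓ : ℕ) (v w : V), t v ℓ - t w ℓ ≤ 6*κ*(D:ℝ) := by
  have hθ0 : (0:ℝ) < ϑ := lt_trans one_pos hϑ
  have hθne : ϑ ≠ 0 := ne_of_gt hθ0
  have hκpos : (0:ℝ) < κ := by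
    have h1 : (0:ℝ) < 1 - 1/ϑ := by
      have : 1/ϑ < 1 := by
        rw [div_lt_one hθ0]; exact hϑ
      linarith
    have h2 : (0:ℝ) < Λ - d := by linarith
    have := mul_pos h1 h2
    rw [hκ]; nlinarith
  have hD1 : (1:ℝ) ≤ (D:ℝ) := by exact_mod_cast hD
  have hκD : (0:ℝ) ≤ κ * (D:ℝ) := by positivity
  -- rewritten drift lower bound
  have hdriftlow : ∀ (z : V) (ℓ : ℕ),
      t z ℓ + Λ - κ/2 - C z (ℓ+1)/ϑ ≤ t z (ℓ+1) := by
    intro z ℓ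
    have h := (hDRIFT z ℓ).1
    have he : d - u + (Λ - d - C z (ℓ+1)) / ϑ
        = Λ - κ/2 - C z (ℓ+1)/ϑ := by
      rw [hκ]; field_simp; ring
    rw [he] at h; linarith
  have hdriftup : ∀ (z : V) (ℓ : ℕ),
      t z (ℓ+1) ≤ t z ℓ + Λ - C z (ℓ+1) := by
    intro z ℓ; have := (hDRIFT z ℓ).2; linarith
  -- every vertex has a neighbour
  have hnbr : ∀ z : V, ∃ x : V, G.Adj z x := by
    intro z
    have h2 : 0 < G.degree z := lt_of_lt_of_le two_pos (hdeg z)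
    exact (G.degree_pos_iff_exists_adj z).1 h2
  -- minimum progress: every node advances at least Λ - κ/2 beyond the old minimum
  have hmin_step : ∀ (ℓ : ℕ) (zm : V), (∀ y : V, t zm ℓ ≤ t y ℓ) →
      ∀ z : V, t zm ℓ + Λ - κ/2 ≤ t z (ℓ+1) := by
    intro ℓ zm hzm z
    have hdl := hdriftlow z ℓ
    by_cases hc : C z (ℓ+1) ≤ 0
    · have hcd : C z (ℓ+1)/ϑ ≤ 0 := div_nonpos_of_nonpos_of_nonneg hc (le_of_lt hθ0)
      have := hzm z
      linarith
    · push_neg at hc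
      rcases hSC 0 z ℓ with h | ⟨b, hb, h⟩ | h
      · obtain ⟨b, hb⟩ := hnbr z
        have h2 := h b hb
        push_cast at h2
        have := hzm b
        linarith
      · push_cast at h
        have := hzm b
        linarith
      · linarith
  -- towards-neighbour existence
  have htoward : ∀ v w : V, v ≠ w →
      ∃ x : V, G.Adj v x ∧ G.dist x w + 1 = G.dist v w := by
    intro v w hvw
    obtain ⟨p, hp⟩ := hconn.exists_walk_length_eq_dist v w
    cases p with
    | nil => exact absurd rfl hvw
    | @cons _ c _ h q =>
      refine ⟨c, h, ?_⟩
      have h1 : G.dist c w ≤ q.length := SimpleGraph.dist_le q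
      have h2 : G.dist v w ≤ G.dist v c + G.dist c w := hconn.dist_triangle
      have h3 : G.dist v c = 1 := SimpleGraph.dist_eq_one_iff_adj.2 h
      rw [SimpleGraph.Walk.length_cons] at hp
      omega
  -- layer-0 skew bound along walks
  have hwalk0 : ∀ (a b : V) (p : G.Walk a b), t a 0 - t b 0 ≤ 4*κ*(p.length : ℝ) := by
    intro a b p
    induction p with
    | nil => simp
    | @cons a' c b' h q ih =>
      have habs := (abs_le.1 (hL0 a' c h)).2
      rw [SimpleGraph.Walk.length_cons]
      push_cast
      linarith
  have hdist0 : ∀ a b : V, t a 0 - t b 0 ≤ 4*κ*((G.dist a b : ℕ) : ℝ) := by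
    intro a b
    obtain ⟨p, hp⟩ := hconn.exists_walk_length_eq_dist a b
    have := hwalk0 a b p
    rw [hp] at this
    exact this
  have hmulD : ∀ a b : V, 4*κ*((G.dist a b : ℕ) : ℝ) ≤ 4*κ*(D:ℝ) := by
    intro a b
    have h : ((G.dist a b : ℕ) : ℝ) ≤ (D:ℝ) := by exact_mod_cast hdiam a b
    have h4 : (0:ℝ) ≤ 4*κ := by positivity
    exact mul_le_mul_of_nonneg_left h h4
  -- THE MAIN INVARIANT
  have hInv : ∀ (ℓ : ℕ) (zm v w : V), (∀ y : V, t zm ℓ ≤ t y ℓ) → v ≠ w →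
      2*t v ℓ - t w ℓ - t zm ℓ - 4*κ*((G.dist v w : ℕ) : ℝ) ≤ 4*κ*(D:ℝ) := by
    intro ℓ
    induction ℓ with
    | zero =>
      intro zm v w hzm hvw
      have h1 := hdist0 v w
      have h2 := hdist0 v zm
      have h3 := hmulD v zm
      linarith
    | succ ℓ ih =>
      intro zm' v w hzm' hvw
      obtain ⟨zm, -, hzm0⟩ := Finset.exists_min_image Finset.univ (fun z => t z ℓ)
        Finset.univ_nonempty
      have hzm : ∀ y : V, t zm ℓ ≤ t y ℓ := fun y => hzm0 y (Finset.mem_univ y)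
      -- hQ : height above the old minimum is at most 4κD
      have hQ : ∀ p : V, t p ℓ - t zm ℓ ≤ 4*κ*(D:ℝ) := by
        intro p
        by_cases hp : p = zm
        · subst hp; simp; positivity
        · have h := ih zm p zm hzm hp
          have h2 := hmulD p zm
          have h3 : (0:ℝ) ≤ 4*κ*((G.dist p zm : ℕ):ℝ) := by positivity
          linarith
      -- new minimum progress (applied to zm')
      have hm' : t zm ℓ + Λ - κ/2 ≤ t zm' (ℓ+1) := hmin_step ℓ zm hzm zm'
      -- distances
      have hδ1 : 1 ≤ G.dist v w := hconn.pos_dist_of_ne hvw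
      have hδ1r : (1:ℝ) ≤ ((G.dist v w : ℕ):ℝ) := by exact_mod_cast hδ1
      obtain ⟨x, hxadj, hxd⟩ := htoward v w hvw
      obtain ⟨y, hyadj, hyd⟩ := htoward w v (Ne.symm hvw)
      have hxdr : ((G.dist x w : ℕ):ℝ) = ((G.dist v w : ℕ):ℝ) - 1 := by
        have : ((G.dist x w : ℕ):ℝ) + 1 = ((G.dist v w : ℕ):ℝ) := by exact_mod_cast hxd
        linarith
      have hydr : ((G.dist v y : ℕ):ℝ) = ((G.dist v w : ℕ):ℝ) - 1 := by
        have h1 : G.dist y v + 1 = G.dist w v := hyd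
        have h2 : G.dist v y = G.dist y v := SimpleGraph.dist_comm
        have h3 : G.dist v w = G.dist w v := SimpleGraph.dist_comm
        have h4 : G.dist v y + 1 = G.dist v w := by omega
        have : ((G.dist v y : ℕ):ℝ) + 1 = ((G.dist v w : ℕ):ℝ) := by exact_mod_cast h4
        linarith
      have hdrv := hdriftup v ℓ
      have hdrw := hdriftlow w ℓ
      have h4κ : (0:ℝ) ≤ 4*κ := by positivity
      have hm0 : (0:ℝ) ≤ 4*κ*((G.dist v w : ℕ):ℝ) := by positivity
      have hm1 : 4*κ*(1:ℝ) ≤ 4*κ*((G.dist v w : ℕ):ℝ) :=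
        mul_le_mul_of_nonneg_left hδ1r h4κ
      -- w-side lower bound disjunction
      have hW : (t w ℓ + Λ - 3*κ/2 ≤ t w (ℓ+1)) ∨ (t y ℓ + Λ + κ/2 ≤ t w (ℓ+1)) := by
        by_cases hcw : C w (ℓ+1) ≤ ϑ*κ
        · left
          have h1 : C w (ℓ+1)/ϑ ≤ κ := by
            rw [div_le_iff₀ hθ0]; linarith [hcw, mul_comm ϑ κ]
          linarith
        · right
          push_neg at hcw
          rcases hJC w ℓ with ⟨-, h2⟩ | ⟨h1, -⟩ | ⟨-, h3⟩
          · have := h2 y hyadj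
            linarith
          · have : (0:ℝ) < ϑ*κ := by positivity
            linarith
          · exfalso
            have : C w (ℓ+1) ≤ κ*ϑ := (div_le_iff₀ hθ0).1 h3
            linarith [mul_comm κ ϑ]
      -- v-side upper bound disjunction
      have hV : (t v (ℓ+1) ≤ t v ℓ + Λ - κ) ∨
          (t v (ℓ+1) ≤ t x ℓ + Λ - κ) ∨
          (∃ x₁ : V, G.Adj v x₁ ∧ t v (ℓ+1) ≤ t x₁ ℓ + Λ - 3*κ) ∨
          (t v (ℓ+1) ≤ t v ℓ + Λ ∧ t v (ℓ+1) ≤ t x ℓ + Λ + κ) := by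
        by_cases hcv1 : κ ≤ C v (ℓ+1)
        · left; linarith
        · push_neg at hcv1
          by_cases hcv2 : C v (ℓ+1) < 0
          · right; left
            rcases hJC v ℓ with ⟨h1, -⟩ | ⟨-, h2⟩ | ⟨h3, -⟩
            · exfalso
              have : C v (ℓ+1)/ϑ < 0 := div_neg_of_neg_of_pos hcv2 hθ0
              linarith
            · have := h2 x hxadj
              linarith
            · exfalso
              have : C v (ℓ+1)/ϑ < 0 := div_neg_of_neg_of_pos hcv2 hθ0
              linarith
          · push_neg at hcv2
            rcases hFC 1 le_rfl v ℓ with ⟨x₁, hx₁, h1⟩ | h2 | h3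
            · right; right; left
              refine ⟨x₁, hx₁, ?_⟩
              push_cast at h1
              linarith
            · right; right; right
              constructor
              · linarith
              · have h4 := h2 x hxadj
                push_cast at h4
                linarith
            · exact absurd h3 (not_le.2 hcv1)
      -- case analysis
      rcases hV with hV1 | hV2 | ⟨x₁, hx₁adj, hV3⟩ | ⟨hV4a, hV4b⟩
      · rcases hW with hW1 | hW2
        · have h := ih zm v w hzm hvw
          linarith
        · by_cases hyv : y = v
          · rw [hyv] at hW2
            have h := hQ v
            linarith
          · have h := ih zm v y hzm (fun hh => hyv hh.symm)
            have h4 : 4*κ*((G.dist v y : ℕ):ℝ) = 4*κ*((G.dist v w : ℕ):ℝ) - 4*κ := by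
              rw [hydr]; ring
            linarith
      · rcases hW with hW1 | hW2
        · by_cases hxw : x = w
          · rw [hxw] at hV2
            have h := hQ w
            linarith
          · have h := ih zm x w hzm hxw
            have h4 : 4*κ*((G.dist x w : ℕ):ℝ) = 4*κ*((G.dist v w : ℕ):ℝ) - 4*κ := by
              rw [hxdr]; ring
            linarith
        · by_cases hxy : x = y
          · rw [hxy] at hV2
            have h := hQ y
            linarith
          · have h := ih zm x y hzm hxy
            have htri : G.dist x y ≤ G.dist x w + G.dist w y := hconn.dist_triangle
            have hwy : G.dist w y = 1 := SimpleGraph.dist_eq_one_iff_adj.2 hyadj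
            have h5 : ((G.dist x y : ℕ):ℝ) ≤ ((G.dist x w : ℕ):ℝ) + 1 := by
              rw [hwy] at htri; exact_mod_cast htri
            have h6 : ((G.dist x y : ℕ):ℝ) ≤ ((G.dist v w : ℕ):ℝ) := by
              rw [hxdr] at h5; linarith
            have h4 : 4*κ*((G.dist x y : ℕ):ℝ) ≤ 4*κ*((G.dist v w : ℕ):ℝ) :=
              mul_le_mul_of_nonneg_left h6 h4κ
            linarith
      · rcases hW with hW1 | hW2
        · by_cases hx₁w : x₁ = w
          · rw [hx₁w] at hV3
            have h := hQ w
            linarith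
          · have h := ih zm x₁ w hzm hx₁w
            have htri : G.dist x₁ w ≤ G.dist x₁ v + G.dist v w := hconn.dist_triangle
            have hx₁v : G.dist x₁ v = 1 := SimpleGraph.dist_eq_one_iff_adj.2 hx₁adj.symm
            have h5 : ((G.dist x₁ w : ℕ):ℝ) ≤ ((G.dist v w : ℕ):ℝ) + 1 := by
              rw [hx₁v] at htri
              have : G.dist x₁ w ≤ 1 + G.dist v w := htri
              push_cast
              exact_mod_cast by linarith [this]
            have h4 : 4*κ*((G.dist x₁ w : ℕ):ℝ) ≤ 4*κ*(((G.dist v w : ℕ):ℝ) + 1) :=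
              mul_le_mul_of_nonneg_left h5 h4κ
            have h4' : 4*κ*(((G.dist v w : ℕ):ℝ) + 1) = 4*κ*((G.dist v w : ℕ):ℝ) + 4*κ := by
              ring
            linarith
        · by_cases hx₁y : x₁ = y
          · rw [hx₁y] at hV3
            have h := hQ y
            linarith
          · have h := ih zm x₁ y hzm hx₁y
            have htri : G.dist x₁ y ≤ G.dist x₁ v + G.dist v y := hconn.dist_triangle
            have hx₁v : G.dist x₁ v = 1 := SimpleGraph.dist_eq_one_iff_adj.2 hx₁adj.symm
            have h5 : ((G.dist x₁ y : ℕ):ℝ) ≤ 1 + ((G.dist v y : ℕ):ℝ) := by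
              rw [hx₁v] at htri; exact_mod_cast htri
            have h6 : ((G.dist x₁ y : ℕ):ℝ) ≤ ((G.dist v w : ℕ):ℝ) := by
              rw [hydr] at h5; linarith
            have h4 : 4*κ*((G.dist x₁ y : ℕ):ℝ) ≤ 4*κ*((G.dist v w : ℕ):ℝ) :=
              mul_le_mul_of_nonneg_left h6 h4κ
            linarith
      · rcases hW with hW1 | hW2
        · by_cases hxw : x = w
          · rw [hxw] at hV4b
            have h := hQ w
            linarith
          · have h := ih zm x w hzm hxw
            have h4 : 4*κ*((G.dist x w : ℕ):ℝ) = 4*κ*((G.dist v w : ℕ):ℝ) - 4*κ := by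
              rw [hxdr]; ring
            linarith
        · by_cases hyv : y = v
          · rw [hyv] at hW2
            have h := hQ v
            linarith
          · have h := ih zm v y hzm (fun hh => hyv hh.symm)
            have h4 : 4*κ*((G.dist v y : ℕ):ℝ) = 4*κ*((G.dist v w : ℕ):ℝ) - 4*κ := by
              rw [hydr]; ring
            linarith
  -- conclusion
  intro ℓ v w
  by_cases hvw : v = w
  · subst hvw
    have : (0:ℝ) ≤ 6*κ*(D:ℝ) := by positivity
    linarith
  · obtain ⟨zm, -, hzm0⟩ := Finset.exists_min_image Finset.univ (fun z => t z ℓ)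
      Finset.univ_nonempty
    have hzm : ∀ y : V, t zm ℓ ≤ t y ℓ := fun y => hzm0 y (Finset.mem_univ y)
    have h := hInv ℓ zm v w hzm hvw
    have h2 := hzm w
    have h3 := hmulD v w
    have h4 : (0:ℝ) ≤ 4*κ*((G.dist v w : ℕ):ℝ) := by positivity
    linarith
end

section
/- (Layer-0 pulse generation along a line.) Let D ≥ 1 and consider nodes 0, 1, …, D, where node 0 is the clock source pulsing at times t_0^k := (k−1)Λ for every integer k ≥ 1, and each node i ∈ {1,…,D} has a fixed link delay δ_i ∈ [d − u, d] and a fixed clock rate ρ_i ∈ [1, ϑ], generating its k-th pulse at time t_i^k := t_{i−1}^k + δ_i + (Λ − d)/ρ_i (i.e. it forwards the pulse Λ − d local time units after receiving it). Then for all i ∈ {0,…,D} and k ≥ 1: (i) (k+i−1)Λ − iκ/2 ≤ t_i^k ≤ (k+i−1)Λ; (ii) t_i^{k+1} = t_i^k + Λ; and (iii) for all i ∈ {0,…,D−1} and k ≥ 2, |t_{i+1}^{k−1} − t_i^k| ≤ κ/2, i.e. the layer-0 local skew between adjacent nodes (comparing consecutively indexed pulses) is at most κ/2. -/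
/-!
A pulse spends `δᵢ + (Λ - d)/ρᵢ ∈ [Λ - κ/2, Λ]` on hop `i`, so `t_i^k` is the source time
`(k - 1)Λ` plus a sum of `i` such hop times; this gives the bounds and the period `Λ`. The
skew `t_{i+1}^{k-1} - t_i^k = t_{i+1}^k - Λ - t_i^k` is one hop time minus `Λ`.
-/

open Finset

theorem delay_add_wait_le {δ ρ d Λ : ℝ} (hδ : δ ≤ d) (hρ : 1 ≤ ρ) (hΛ : d ≤ Λ) :
    δ + (Λ - d) / ρ ≤ Λ := by
  have := div_le_self (sub_nonneg.2 hΛ) hρ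
  linarith

theorem le_delay_add_wait {δ ρ d u ϑ Λ : ℝ} (hδ : d - u ≤ δ) (hρ₀ : 0 < ρ) (hρ : ρ ≤ ϑ)
    (hΛ : d ≤ Λ) : d - u + (Λ - d) / ϑ ≤ δ + (Λ - d) / ρ := by
  have := div_le_div_of_nonneg_left (sub_nonneg.2 hΛ) hρ₀ hρ
  linarith

theorem eq_add_sum_of_succ {t : ℕ → ℕ → ℝ} {s : ℕ → ℝ} {D k : ℕ}
    (hrec : ∀ i < D, t (i + 1) k = t i k + s (i + 1)) :
    ∀ i ≤ D, t i k = t 0 k + ∑ j ∈ range i, s (j + 1)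
  | 0, _ => by simp
  | i + 1, hi => by
    rw [hrec i hi, eq_add_sum_of_succ hrec i (by omega), sum_range_succ]
    ring

theorem stmt17_general
    (ϑ u d Λ κ : ℝ)
    (hΛ : d < Λ)
    (hκ : κ = 2 * (u + (1 - 1/ϑ) * (Λ - d)))
    (D : ℕ)
    (δ ρ : ℕ → ℝ)
    (hδ : ∀ i : ℕ, 1 ≤ i → i ≤ D → d - u ≤ δ i ∧ δ i ≤ d)
    (hρ : ∀ i : ℕ, 1 ≤ i → i ≤ D → 1 ≤ ρ i ∧ ρ i ≤ ϑ)
    (t : ℕ → ℕ → ℝ)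
    (ht0 : ∀ k : ℕ, 1 ≤ k → t 0 k = ((k:ℝ) - 1) * Λ)
    (htrec : ∀ i k : ℕ, 1 ≤ i → i ≤ D → 1 ≤ k →
      t i k = t (i-1) k + δ i + (Λ - d) / ρ i) :
    (∀ i k : ℕ, i ≤ D → 1 ≤ k →
      ((k:ℝ) + (i:ℝ) - 1) * Λ - (i:ℝ)*κ/2 ≤ t i k ∧
      t i k ≤ ((k:ℝ) + (i:ℝ) - 1) * Λ) ∧
    (∀ i k : ℕ, i ≤ D → 1 ≤ k → t i (k+1) = t i k + Λ) ∧
    (∀ i k : ℕ, i + 1 ≤ D → 2 ≤ k → |t (i+1) (k-1) - t i k| ≤ κ/2) := by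
  set s : ℕ → ℝ := fun j ↦ δ j + (Λ - d) / ρ j
  have hop : ∀ j, 1 ≤ j → j ≤ D → Λ - κ / 2 ≤ s j ∧ s j ≤ Λ := by
    intro j hj₁ hjD
    obtain ⟨hδ₁, hδ₂⟩ := hδ j hj₁ hjD
    obtain ⟨hρ₁, hρ₂⟩ := hρ j hj₁ hjD
    refine ⟨?_, delay_add_wait_le hδ₂ hρ₁ hΛ.le⟩
    calc Λ - κ / 2 = d - u + (Λ - d) / ϑ := by rw [hκ]; ring
      _ ≤ s j := le_delay_add_wait hδ₁ (by linarith) hρ₂ hΛ.le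
  have hrec : ∀ i k, i < D → 1 ≤ k → t (i + 1) k = t i k + s (i + 1) := fun i k hi hk ↦ by
    rw [htrec (i + 1) k (by omega) hi hk, Nat.add_sub_cancel, add_assoc]
  have closed : ∀ i k, i ≤ D → 1 ≤ k → t i k = ((k:ℝ) - 1) * Λ + ∑ j ∈ range i, s (j + 1) :=
    fun i k hi hk ↦ ht0 k hk ▸ eq_add_sum_of_succ (fun i hi' ↦ hrec i k hi' hk) i hi
  have periodic : ∀ i k, i ≤ D → 1 ≤ k → t i (k + 1) = t i k + Λ := fun i k hi hk ↦ by
    rw [closed i (k + 1) hi (by omega), closed i k hi hk]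
    push_cast
    ring
  refine ⟨fun i k hi hk ↦ ?_, periodic, fun i k hi hk ↦ ?_⟩
  · have hs : ∀ j ∈ range i, Λ - κ / 2 ≤ s (j + 1) ∧ s (j + 1) ≤ Λ :=
      fun j hj ↦ hop (j + 1) (by omega) (by rw [mem_range] at hj; omega)
    have lower := card_nsmul_le_sum _ _ _ fun j hj ↦ (hs j hj).1
    have upper := sum_le_card_nsmul _ _ _ fun j hj ↦ (hs j hj).2
    simp only [card_range, nsmul_eq_mul] at lower upper
    rw [closed i k hi hk]
    constructor <;> linarith
  · obtain ⟨k, rfl⟩ : ∃ m, k = m + 1 := ⟨k - 1, by omega⟩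
    rw [Nat.add_sub_cancel, periodic i k (by omega) (by omega), hrec i k hi (by omega), abs_le]
    obtain ⟨hs₁, hs₂⟩ := hop (i + 1) (by omega) hi
    constructor <;> linarith

/-- Lemma `layer0`: pulse generation along a line of nodes
`0, 1, …, D`, with fixed link delays `δ i ∈ [d-u, d]` and clock rates
`ρ i ∈ [1, ϑ]`. -/
theorem stmt17
    (ϑ u d Λ κ : ℝ)
    (hϑ : 1 < ϑ) (hu : 0 ≤ u) (hd : u ≤ d) (hΛ : d < Λ)
    (hκ : κ = 2 * (u + (1 - 1/ϑ) * (Λ - d)))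
    (D : ℕ) (hD : 1 ≤ D)
    (δ ρ : ℕ → ℝ)
    (hδ : ∀ i : ℕ, 1 ≤ i → i ≤ D → d - u ≤ δ i ∧ δ i ≤ d)
    (hρ : ∀ i : ℕ, 1 ≤ i → i ≤ D → 1 ≤ ρ i ∧ ρ i ≤ ϑ)
    (t : ℕ → ℕ → ℝ)
    (ht0 : ∀ k : ℕ, 1 ≤ k → t 0 k = ((k:ℝ) - 1) * Λ)
    (htrec : ∀ i k : ℕ, 1 ≤ i → i ≤ D → 1 ≤ k →
      t i k = t (i-1) k + δ i + (Λ - d) / ρ i) :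
    (∀ i k : ℕ, i ≤ D → 1 ≤ k →
      ((k:ℝ) + (i:ℝ) - 1) * Λ - (i:ℝ)*κ/2 ≤ t i k ∧
      t i k ≤ ((k:ℝ) + (i:ℝ) - 1) * Λ) ∧
    (∀ i k : ℕ, i ≤ D → 1 ≤ k → t i (k+1) = t i k + Λ) ∧
    (∀ i k : ℕ, i + 1 ≤ D → 2 ≤ k → |t (i+1) (k-1) - t i k| ≤ κ/2) :=
  stmt17_general ϑ u d Λ κ hΛ hκ D δ ρ hδ hρ t ht0 htrec
end
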